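/- Let n ≥ 1 be a natural number and p ∈ (0,1) a real number. If A and B are independent random variables each following the binomial distribution Bin(n, p), then E[ 1/(2(1 + A)) ] ≥ E[ 1/(2 + A + B) ]. -/
import Mathlib


/-- The probability that a `Bin(n, p)` random variable equals `k`. -/
def binomialPMF (n : ℕ) (p : ℝ) (k : ℕ) : ℝ :=
  (n.choose k : ℝ) * p ^ k * (1 - p) ^ (n - k)

lemma binomialPMF_nonneg (n : ℕ) (p : ℝ) (hp0 : 0 < p) (hp1 : p < 1) (k : ℕ) :
    0 ≤ binomialPMF n p k := by
  unfold binomialPMF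
  have : (0:ℝ) ≤ 1 - p := by linarith
  positivity

lemma sum_binomialPMF (n : ℕ) (p : ℝ) :
    ∑ k ∈ Finset.range (n + 1), binomialPMF n p k = 1 := by
  have h := add_pow p (1 - p) n
  have h1 : p + (1 - p) = 1 := by ring
  rw [h1, one_pow] at h
  rw [h]
  apply Finset.sum_congr rfl
  intro k _
  unfold binomialPMF
  ring

/-- For independent `A, B ~ Bin(n, p)` with `n ≥ 1` and `p ∈ (0,1)`:
`E[1/(2(1 + A))] ≥ E[1/(2 + A + B)]`, where the expectation over `(A, B)` is taken
with respect to the product of the two binomial marginals. -/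
theorem collapsed_ipw_variance_le (n : ℕ) (hn : 1 ≤ n) (p : ℝ)
    (hp0 : 0 < p) (hp1 : p < 1) :
    ∑ k ∈ Finset.range (n + 1), (1 / (2 * (1 + (k : ℝ)))) * binomialPMF n p k
      ≥ ∑ k ∈ Finset.range (n + 1), ∑ j ∈ Finset.range (n + 1),
          (1 / (2 + (k : ℝ) + (j : ℝ))) * (binomialPMF n p k * binomialPMF n p j) := by
  set P := fun k => binomialPMF n p k with hP
  have hPn : ∀ k, 0 ≤ P k := fun k => binomialPMF_nonneg n p hp0 hp1 k
  have hsum : ∑ k ∈ Finset.range (n + 1), P k = 1 := sum_binomialPMF n p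
  have key : ∀ k j : ℕ, (1 / (2 + (k : ℝ) + (j : ℝ)))
      ≤ (1/4) * (1 / (1 + (k:ℝ)) + 1 / (1 + (j:ℝ))) := by
    intro k j
    have hk : (0:ℝ) < 1 + (k:ℝ) := by positivity
    have hj : (0:ℝ) < 1 + (j:ℝ) := by positivity
    have heq : (1:ℝ)/4 * (1 / (1 + (k:ℝ)) + 1 / (1 + (j:ℝ)))
        = (2 + (k:ℝ) + (j:ℝ)) / (4 * ((1 + (k:ℝ)) * (1 + (j:ℝ)))) := by
      field_simp
      ring
    rw [heq, div_le_div_iff₀ (by linarith) (by positivity)]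
    nlinarith [sq_nonneg ((k:ℝ) - (j:ℝ))]
  have step1 : ∑ k ∈ Finset.range (n + 1), ∑ j ∈ Finset.range (n + 1),
          (1 / (2 + (k : ℝ) + (j : ℝ))) * (P k * P j)
      ≤ ∑ k ∈ Finset.range (n + 1), ∑ j ∈ Finset.range (n + 1),
          ((1/4) * (1 / (1 + (k:ℝ)) + 1 / (1 + (j:ℝ)))) * (P k * P j) := by
    apply Finset.sum_le_sum
    intro k _
    apply Finset.sum_le_sum
    intro j _
    exact mul_le_mul_of_nonneg_right (key k j) (mul_nonneg (hPn k) (hPn j))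
  have step2 : ∑ k ∈ Finset.range (n + 1), ∑ j ∈ Finset.range (n + 1),
          ((1/4) * (1 / (1 + (k:ℝ)) + 1 / (1 + (j:ℝ)))) * (P k * P j)
      = ∑ k ∈ Finset.range (n + 1), (1 / (2 * (1 + (k : ℝ)))) * P k := by
    have expand : ∀ k ∈ Finset.range (n+1),
        ∑ j ∈ Finset.range (n + 1),
          ((1/4) * (1 / (1 + (k:ℝ)) + 1 / (1 + (j:ℝ)))) * (P k * P j)
        = (1/4) * (1 / (1 + (k:ℝ))) * P k * (∑ j ∈ Finset.range (n+1), P j)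
          + (1/4) * P k * (∑ j ∈ Finset.range (n+1), (1 / (1 + (j:ℝ))) * P j) := by
      intro k _
      rw [Finset.mul_sum, Finset.mul_sum, ← Finset.sum_add_distrib]
      apply Finset.sum_congr rfl
      intro j _
      ring
    rw [Finset.sum_congr rfl expand]
    rw [Finset.sum_add_distrib, hsum]
    have e1 : ∑ k ∈ Finset.range (n+1), (1/4) * (1 / (1 + (k:ℝ))) * P k * 1
        = (1/4) * ∑ k ∈ Finset.range (n+1), (1 / (1 + (k:ℝ))) * P k := by
      rw [Finset.mul_sum]
      apply Finset.sum_congr rfl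
      intro k _; ring
    have e2 : ∑ k ∈ Finset.range (n+1),
          (1/4) * P k * (∑ j ∈ Finset.range (n+1), (1 / (1 + (j:ℝ))) * P j)
        = (1/4) * (∑ j ∈ Finset.range (n+1), (1 / (1 + (j:ℝ))) * P j) := by
      rw [← Finset.sum_mul]
      rw [show (∑ k ∈ Finset.range (n+1), (1/4 : ℝ) * P k) = 1/4 by
        rw [← Finset.mul_sum, hsum, mul_one]]
    rw [e1, e2, ← add_mul, Finset.mul_sum]
    apply Finset.sum_congr rfl
    intro k _
    have hk : (1 + (k:ℝ)) ≠ 0 := by positivity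
    field_simp
    ring
  calc ∑ k ∈ Finset.range (n + 1), ∑ j ∈ Finset.range (n + 1),
          (1 / (2 + (k : ℝ) + (j : ℝ))) * (P k * P j)
      ≤ _ := step1
    _ = _ := step2
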